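/- arXiv:2407.05763 — 2 statements merged into one kernel-verified Lean document; each statement's English description precedes it below -/
import Mathlib

section
/- Let G ∈ ℝ^{m×m} and P ∈ ℝ^{m×m} symmetric positive definite, and suppose there is β > 0 with yᵀ(PG + GᵀP)y ≥ β·yᵀPy for all y ∈ ℝ^m. For θ ≠ 0 let ‖θ‖_d = e^{s_θ}, where s_θ is the unique real with ‖exp(−s_θ G)θ‖_P = 1, and set ‖0‖_d = 0. If μ > −β/2, then the map θ ↦ ‖θ‖_d^{μ}·θ (defined as 0 at θ = 0) is continuous at θ = 0, i.e. ‖θ‖_d^{μ}·|θ| → 0 as θ → 0. -/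
open Matrix Filter

noncomputable def euclNorm {ι : Type*} [Fintype ι] (x : ι → ℝ) : ℝ :=
  Real.sqrt (x ⬝ᵥ x)

/-- The weighted Euclidean norm ‖x‖_P = √(xᵀPx). -/
noncomputable def wnorm {ι : Type*} [Fintype ι] (P : Matrix ι ι ℝ) (x : ι → ℝ) : ℝ :=
  Real.sqrt (x ⬝ᵥ P.mulVec x)

/-!
Write `d = ‖θ‖_d`, `s = log d` and let `u(t) = exp(tG) z` be the flow through `z = exp(-sG) θ`,
so that `‖u(0)‖_P = 1` and `u(s) = θ`. The hypothesis on `PG + GᵀP` says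
`(‖u‖_P²)' ≥ β ‖u‖_P²`, so `e^{-βt} ‖u(t)‖_P²` is nondecreasing. Comparing `t = 0` with `t = s`
shows that `‖θ‖_P < 1` forces `d < 1` and `‖θ‖_P² ≤ d^β`. Hence `d^μ ≤ 1` if `μ ≥ 0`, and
`d^μ ≤ ‖θ‖_P^{2μ/β}` if `μ < 0`; as `|θ| ≲ ‖θ‖_P`, in either case
`d^μ |θ| ≲ ‖θ‖_P + ‖θ‖_P^{(2μ+β)/β}`, which tends to `0` because `μ + β/2 > 0`.
-/

theorem monotone_exp_neg_mul_mul_of_mul_le_deriv {f f' : ℝ → ℝ} {b : ℝ}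
    (hf : ∀ t, HasDerivAt f (f' t) t) (h : ∀ t, b * f t ≤ f' t) :
    Monotone fun t => Real.exp (-b * t) * f t := by
  have hg : ∀ t, HasDerivAt (fun t => Real.exp (-b * t) * f t)
      (Real.exp (-b * t) * (f' t - b * f t)) t := fun t =>
    (((hasDerivAt_id t).const_mul (-b)).exp.mul (hf t)).congr_deriv (by simp only [id]; ring)
  refine monotone_of_deriv_nonneg (fun t => (hg t).differentiableAt) fun t => ?_
  rw [(hg t).deriv]
  exact mul_nonneg (Real.exp_pos _).le (sub_nonneg.mpr (h t))

theorem Real.rpow_mul_sqrt_le_of_le_rpow {d q β μ : ℝ} (hβ : 0 < β) (hd : 0 < d) (hd1 : d ≤ 1)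
    (hq : 0 ≤ q) (hqd : q ≤ d ^ β) : d ^ μ * √q ≤ √q + q ^ ((μ + β / 2) / β) := by
  have hκ := Real.rpow_nonneg hq ((μ + β / 2) / β)
  rcases le_or_gt 0 μ with hμ | hμ
  · have := Real.rpow_le_one hd.le hd1 hμ
    nlinarith [Real.sqrt_nonneg q]
  have he : (μ + β / 2) / β + -μ / β = 1 / 2 := by field_simp; ring
  have hsplit : √q = q ^ ((μ + β / 2) / β) * q ^ (-μ / β) := by
    rw [Real.sqrt_eq_rpow, ← he, Real.rpow_add' hq (by rw [he]; norm_num)]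
  have hpow : q ^ (-μ / β) ≤ d ^ (-μ) := calc
    q ^ (-μ / β) ≤ (d ^ β) ^ (-μ / β) := Real.rpow_le_rpow hq hqd (div_nonneg (by linarith) hβ.le)
    _ = d ^ (-μ) := by rw [← Real.rpow_mul hd.le]; congr 1; field_simp
  calc d ^ μ * √q ≤ d ^ μ * (q ^ ((μ + β / 2) / β) * d ^ (-μ)) := by
        rw [hsplit]; gcongr
    _ = q ^ ((μ + β / 2) / β) := by
        rw [Real.rpow_neg hd.le, mul_left_comm, mul_inv_cancel₀ (Real.rpow_pos_of_pos hd μ).ne',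
          mul_one]
    _ ≤ √q + q ^ ((μ + β / 2) / β) := le_add_of_nonneg_left (Real.sqrt_nonneg q)

theorem tendsto_sqrt_add_rpow_nhds_zero {κ : ℝ} (hκ : 0 < κ) :
    Tendsto (fun x : ℝ => √x + x ^ κ) (nhds 0) (nhds 0) := by
  have h : ContinuousAt (fun x : ℝ => √x + x ^ κ) 0 :=
    Real.continuous_sqrt.continuousAt.add (Real.continuousAt_rpow_const 0 κ (Or.inr hκ.le))
  simpa [Real.zero_rpow hκ.ne'] using h.tendsto

theorem exists_le_mul_of_continuous_of_homogeneous {E : Type*} [NormedAddCommGroup E]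
    [NormedSpace ℝ E] [FiniteDimensional ℝ E] {p q : E → ℝ} (hp : Continuous p)
    (hq : Continuous q) (hq_pos : ∀ x ≠ 0, 0 < q x)
    (hp_smul : ∀ (r : ℝ) x, p (r • x) = r ^ 2 * p x)
    (hq_smul : ∀ (r : ℝ) x, q (r • x) = r ^ 2 * q x) :
    ∃ C, ∀ x, p x ≤ C * q x := by
  have hS : ∀ y ∈ Metric.sphere (0 : E) 1, y ≠ 0 := fun y hy =>
    ne_zero_of_mem_unit_sphere (⟨y, hy⟩ : Metric.sphere (0 : E) 1)
  obtain ⟨C, hC⟩ := (isCompact_sphere (0 : E) 1).exists_bound_of_continuousOn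
    (hp.continuousOn.div hq.continuousOn fun y hy => (hq_pos y (hS y hy)).ne')
  refine ⟨C, fun x => ?_⟩
  rcases eq_or_ne x 0 with rfl | hx
  · have hp0 : p 0 = 0 := by simpa using hp_smul 0 0
    have hq0 : q 0 = 0 := by simpa using hq_smul 0 0
    simp [hp0, hq0]
  set y := ‖x‖⁻¹ • x
  have hy : y ∈ Metric.sphere (0 : E) 1 := by simp [y, norm_smul, hx]
  have hpy : p y ≤ C * q y := by
    have := (le_abs_self _).trans (hC y hy)
    rwa [Pi.div_apply, div_le_iff₀ (hq_pos y (hS y hy))] at this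
  have hxy : x = ‖x‖ • y := by simp [y, smul_smul, hx]
  rw [hxy, hp_smul, hq_smul, mul_left_comm]
  exact mul_le_mul_of_nonneg_left hpy (sq_nonneg _)

section

variable {ι : Type*} [Fintype ι]

theorem continuous_dotProduct_mulVec_self (A : Matrix ι ι ℝ) :
    Continuous fun x : ι → ℝ => x ⬝ᵥ A *ᵥ x := by
  simp only [dotProduct, mulVec]
  fun_prop

theorem smul_dotProduct_mulVec_smul (A : Matrix ι ι ℝ) (r : ℝ) (x : ι → ℝ) :
    r • x ⬝ᵥ A *ᵥ (r • x) = r ^ 2 * (x ⬝ᵥ A *ᵥ x) := by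
  simp only [mulVec_smul, smul_dotProduct, dotProduct_smul, smul_eq_mul]
  ring

theorem Matrix.PosDef.exists_dotProduct_self_le {P : Matrix ι ι ℝ} (hP : P.PosDef) :
    ∃ C, ∀ x, x ⬝ᵥ x ≤ C * (x ⬝ᵥ P *ᵥ x) := by
  refine exists_le_mul_of_continuous_of_homogeneous (by simp only [dotProduct]; fun_prop)
    (continuous_dotProduct_mulVec_self P) (fun x hx => by simpa using hP.dotProduct_mulVec_pos hx)
    (fun r x => ?_) (smul_dotProduct_mulVec_smul P)
  simp only [smul_dotProduct, dotProduct_smul, smul_eq_mul]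
  ring

theorem HasDerivAt.dotProduct {u v : ℝ → ι → ℝ} {u' v' : ι → ℝ} {t : ℝ}
    (hu : HasDerivAt u u' t) (hv : HasDerivAt v v' t) :
    HasDerivAt (fun t => u t ⬝ᵥ v t) (u' ⬝ᵥ v t + u t ⬝ᵥ v') t := by
  unfold _root_.dotProduct
  rw [← Finset.sum_add_distrib]
  exact HasDerivAt.fun_sum fun i _ => (hasDerivAt_pi.mp hu i).mul (hasDerivAt_pi.mp hv i)

theorem HasDerivAt.mulVec (A : Matrix ι ι ℝ) {u : ℝ → ι → ℝ} {u' : ι → ℝ} {t : ℝ}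
    (hu : HasDerivAt u u' t) : HasDerivAt (fun t => A *ᵥ u t) (A *ᵥ u') t :=
  (mulVecLin A).toContinuousLinearMap.hasFDerivAt.comp_hasDerivAt t hu

theorem mulVec_dotProduct_mulVec_add_dotProduct_mulVec_mulVec (G P : Matrix ι ι ℝ)
    (u : ι → ℝ) :
    G *ᵥ u ⬝ᵥ P *ᵥ u + u ⬝ᵥ P *ᵥ (G *ᵥ u) = u ⬝ᵥ (P * G + Gᵀ * P) *ᵥ u := by
  rw [add_mulVec, dotProduct_add, ← mulVec_mulVec, ← mulVec_mulVec, dotProduct_mulVec u Gᵀ,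
    vecMul_transpose]
  ring

variable [DecidableEq ι]

theorem hasDerivAt_exp_smul_mulVec (G : Matrix ι ι ℝ) (z : ι → ℝ) (t : ℝ) :
    HasDerivAt (fun t : ℝ => NormedSpace.exp (t • G) *ᵥ z)
      (G *ᵥ (NormedSpace.exp (t • G) *ᵥ z)) t := by
  let _ := Matrix.linftyOpNormedRing (n := ι) (α := ℝ)
  let _ := Matrix.linftyOpNormedAlgebra (n := ι) (R := ℝ) (α := ℝ)
  have hL := (LinearMap.toContinuousLinearMap ((mulVecBilin ℝ ℝ).flip z)).hasFDerivAt
    (x := NormedSpace.exp (t • G))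
  exact (hL.comp_hasDerivAt t (hasDerivAt_exp_smul_const' G t)).congr_deriv
    (mulVec_mulVec z G _).symm

theorem monotone_exp_neg_mul_dotProduct_exp_smul_mulVec {G P : Matrix ι ι ℝ} {β : ℝ}
    (hlow : ∀ y : ι → ℝ, β * (y ⬝ᵥ P *ᵥ y) ≤ y ⬝ᵥ (P * G + Gᵀ * P) *ᵥ y) (z : ι → ℝ) :
    Monotone fun t : ℝ => Real.exp (-β * t) *
      (NormedSpace.exp (t • G) *ᵥ z ⬝ᵥ P *ᵥ (NormedSpace.exp (t • G) *ᵥ z)) := by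
  refine monotone_exp_neg_mul_mul_of_mul_le_deriv (fun t => ?_) fun t => hlow _
  have hu := hasDerivAt_exp_smul_mulVec G z t
  exact (hu.dotProduct (hu.mulVec P)).congr_deriv
    (mulVec_dotProduct_mulVec_add_dotProduct_mulVec_mulVec G P _)

theorem lt_one_and_dotProduct_mulVec_le_rpow {G P : Matrix ι ι ℝ} {β : ℝ} (hβ : 0 < β)
    (hlow : ∀ y : ι → ℝ, β * (y ⬝ᵥ P *ᵥ y) ≤ y ⬝ᵥ (P * G + Gᵀ * P) *ᵥ y)
    {θ : ι → ℝ} {d : ℝ} (hd : 0 < d)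
    (hθd : wnorm P (NormedSpace.exp ((-Real.log d) • G) *ᵥ θ) = 1)
    (hθ : θ ⬝ᵥ P *ᵥ θ < 1) : d < 1 ∧ θ ⬝ᵥ P *ᵥ θ ≤ d ^ β := by
  set s := Real.log d
  set z := NormedSpace.exp ((-s) • G) *ᵥ θ
  have hz : z ⬝ᵥ P *ᵥ z = 1 := Real.sqrt_eq_one.mp hθd
  have hflow : NormedSpace.exp (s • G) *ᵥ z = θ := by
    rw [mulVec_mulVec, ← Matrix.exp_add_of_commute _ _ (((Commute.refl G).smul_left s).smul_right _),
      ← add_smul, add_neg_cancel, zero_smul, NormedSpace.exp_zero, one_mulVec]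
  have hmono := monotone_exp_neg_mul_dotProduct_exp_smul_mulVec hlow z
  have hs : s < 0 := by
    by_contra! hs
    have h := hmono hs
    simp only [mul_zero, zero_smul, NormedSpace.exp_zero, one_mulVec, hz, hflow,
      Real.exp_zero, mul_one] at h
    have : Real.exp (-β * s) ≤ 1 := Real.exp_le_one_iff.mpr (by nlinarith)
    nlinarith [Real.exp_pos (-β * s)]
  refine ⟨(Real.log_neg_iff hd).mp hs, ?_⟩
  have h := hmono hs.le
  simp only [mul_zero, zero_smul, NormedSpace.exp_zero, one_mulVec, hz, hflow,
    Real.exp_zero, mul_one] at h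
  rw [Real.rpow_def_of_pos hd]
  calc θ ⬝ᵥ P *ᵥ θ = Real.exp (β * s) * (Real.exp (-β * s) * (θ ⬝ᵥ P *ᵥ θ)) := by
        rw [← mul_assoc, ← Real.exp_add, neg_mul, add_neg_cancel, Real.exp_zero, one_mul]
    _ ≤ Real.exp (β * s) := mul_le_of_le_one_right (Real.exp_pos _).le h
    _ = Real.exp (s * β) := by rw [mul_comm]

end

theorem consensus_term_continuous_at_zero_general
    (m : ℕ) (G P : Matrix (Fin m) (Fin m) ℝ)
    (hP : P.PosDef)
    (β : ℝ) (hβ : 0 < β)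
    (hlow : ∀ y : Fin m → ℝ,
      β * (y ⬝ᵥ P.mulVec y) ≤ y ⬝ᵥ (P * G + Gᵀ * P).mulVec y)
    (dnorm : (Fin m → ℝ) → ℝ)
    (hdpos : ∀ θ : Fin m → ℝ, θ ≠ 0 → 0 < dnorm θ)
    (hdspec : ∀ θ : Fin m → ℝ, θ ≠ 0 →
      wnorm P ((NormedSpace.exp ((-Real.log (dnorm θ)) • G)).mulVec θ) = 1)
    (μ : ℝ) (hμ : -β / 2 < μ) :
    Tendsto (fun θ : Fin m → ℝ => dnorm θ ^ μ * euclNorm θ) (nhds 0) (nhds 0) := by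
  obtain ⟨C, hC⟩ := hP.exists_dotProduct_self_le
  set q := fun θ : Fin m → ℝ => θ ⬝ᵥ P *ᵥ θ
  have hq_nonneg (θ) : 0 ≤ q θ := by simpa using hP.posSemidef.dotProduct_mulVec_nonneg θ
  have hq : Tendsto q (nhds 0) (nhds 0) := by
    simpa [q] using (continuous_dotProduct_mulVec_self P).tendsto 0
  set κ := (μ + β / 2) / β
  have hκ : 0 < κ := div_pos (by linarith) hβ
  have hbound : Tendsto (fun θ => √C * (√(q θ) + q θ ^ κ)) (nhds 0) (nhds 0) := by
    simpa using ((tendsto_sqrt_add_rpow_nhds_zero hκ).comp hq).const_mul √C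
  refine squeeze_zero' (Eventually.of_forall fun θ => ?_) ?_ hbound
  · rcases eq_or_ne θ 0 with rfl | hθ
    · simp [euclNorm]
    · exact mul_nonneg (Real.rpow_nonneg (hdpos θ hθ).le μ) (Real.sqrt_nonneg _)
  filter_upwards [hq.eventually (gt_mem_nhds one_pos)] with θ hθ1
  rcases eq_or_ne θ 0 with rfl | hθ
  · simp [euclNorm, q, Real.zero_rpow hκ.ne']
  obtain ⟨hd1, hqd⟩ := lt_one_and_dotProduct_mulVec_le_rpow hβ hlow (hdpos θ hθ) (hdspec θ hθ) hθ1
  calc dnorm θ ^ μ * euclNorm θ ≤ dnorm θ ^ μ * (√C * √(q θ)) := by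
        gcongr
        · exact Real.rpow_nonneg (hdpos θ hθ).le μ
        · rw [← Real.sqrt_mul' C (hq_nonneg θ)]
          exact Real.sqrt_le_sqrt (hC θ)
    _ = √C * (dnorm θ ^ μ * √(q θ)) := by ring
    _ ≤ √C * (√(q θ) + q θ ^ κ) := by
        gcongr
        exact Real.rpow_mul_sqrt_le_of_le_rpow hβ (hdpos θ hθ) hd1.le (hq_nonneg θ) hqd

theorem consensus_term_continuous_at_zero
    (m : ℕ) (G P : Matrix (Fin m) (Fin m) ℝ)
    (hP : P.PosDef)
    (β : ℝ) (hβ : 0 < β)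
    (hlow : ∀ y : Fin m → ℝ,
      β * (y ⬝ᵥ P.mulVec y) ≤ y ⬝ᵥ (P * G + Gᵀ * P).mulVec y)
    (dnorm : (Fin m → ℝ) → ℝ)
    (hd0 : dnorm 0 = 0)
    (hdpos : ∀ θ : Fin m → ℝ, θ ≠ 0 → 0 < dnorm θ)
    (hdspec : ∀ θ : Fin m → ℝ, θ ≠ 0 →
      wnorm P ((NormedSpace.exp ((-Real.log (dnorm θ)) • G)).mulVec θ) = 1)
    (μ : ℝ) (hμ : -β / 2 < μ) :
    Tendsto (fun θ : Fin m → ℝ => dnorm θ ^ μ * euclNorm θ) (nhds 0) (nhds 0) :=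
  consensus_term_continuous_at_zero_general m G P hP β hβ hlow dnorm hdpos hdspec μ hμ
end

section
/- Let d(s) = exp(sG_d) for s ∈ ℝ be a linear dilation in ℝ^n (G_d ∈ ℝ^{n×n} anti-Hurwitz, with ‖d(s)x‖ → ∞ as s → +∞ and ‖d(s)x‖ → 0 as s → −∞ for every x ≠ 0), and let f : ℝ^n → ℝ^n be a continuous d-homogeneous vector field of degree μ, i.e. f(d(s)x) = e^{μs}·d(s)·f(x) for all s ∈ ℝ and x ∈ ℝ^n. If the system ẋ = f(x) is globally uniformly asymptotically stable, then: (i) if μ < 0, it is globally uniformly finite-time stable, i.e. it is Lyapunov stable and there exists a locally bounded settling-time function T : ℝ^n → ℝ such that every solution with x(0) = x₀ satisfies x(t) = 0 for all t ≥ T(x₀); (ii) if μ > 0, it is globally uniformly nearly fixed-time stable, i.e. it is Lyapunov stable and for every r > 0 there exists T_r > 0, independent of x₀, such that every solution satisfies ‖x(t)‖ < r for all t ≥ T_r. -/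
/-
Write `d s = exp (s • Gd)` and `B c = ⋃_{s ≤ c} d s 𝔹` (`𝔹` the Euclidean unit ball) for the
homogeneous balls. They increase with `c`, exhaust `ℝⁿ` (limit of `‖d s x‖` at `-∞`), shrink to
`{0}` (limit at `+∞`), and are bounded (Banach–Steinhaus for the family `d s`, `s ≤ c`).
Uniform attractivity gives a time `T` after which every solution started in `B 1` stays in
`B 0`; since `t ↦ d (-c) x (e^{-μc} t)` is again a solution, solutions started in `B (c + 1)` stay
in `B c` after time `T e^{-μc}`. Descending level by level, the time to get from `B C` into
`B (C - k)` is a geometric sum. For `μ < 0` it is at most `T e^{-μC} / (e^{-μ} - 1)` uniformly in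
`k`, so solutions from `B C` vanish after that time; for `μ > 0` every solution is in `B 0` after
time `T / (1 - e^{-μ})`, and uniform attractivity from the bounded set `B 0` does the rest.
-/

open Matrix Filter

/-- A (forward) solution of ẋ = f(x). -/
def IsSol {n : ℕ} (f : (Fin n → ℝ) → (Fin n → ℝ)) (x : ℝ → Fin n → ℝ) : Prop :=
  ∀ t : ℝ, 0 ≤ t → HasDerivAt x (f (x t)) t

open Set Topology

section EuclNorm

variable {ι : Type*} [Fintype ι]

lemma euclNorm_eq_norm_toLp (x : ι → ℝ) : euclNorm x = ‖WithLp.toLp 2 x‖ := by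
  simp [euclNorm, EuclideanSpace.norm_eq, dotProduct, sq]

lemma euclNorm_nonneg (x : ι → ℝ) : 0 ≤ euclNorm x := Real.sqrt_nonneg _

lemma continuous_euclNorm : Continuous (euclNorm : (ι → ℝ) → ℝ) := by
  simpa only [funext euclNorm_eq_norm_toLp] using (PiLp.continuous_toLp 2 fun _ : ι => ℝ).norm

lemma norm_le_euclNorm (x : ι → ℝ) : ‖x‖ ≤ euclNorm x :=
  (pi_norm_le_iff_of_nonneg (euclNorm_nonneg x)).2 fun i => by
    simpa [euclNorm_eq_norm_toLp] using PiLp.norm_apply_le (WithLp.toLp 2 x) i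

lemma exists_euclNorm_sub_lt_subset {U : Set (ι → ℝ)} (hU : IsOpen U) {x₀ : ι → ℝ}
    (hx₀ : x₀ ∈ U) : ∃ ε > 0, ∀ y, euclNorm (y - x₀) < ε → y ∈ U := by
  obtain ⟨ε, hε, hball⟩ := Metric.isOpen_iff.mp hU x₀ hx₀
  exact ⟨ε, hε, fun y hy => hball <| by
    rw [Metric.mem_ball, dist_eq_norm]; exact (norm_le_euclNorm _).trans_lt hy⟩

variable [DecidableEq ι]

lemma euclNorm_mulVec_le (A : Matrix ι ι ℝ) (x : ι → ℝ) :
    euclNorm (A *ᵥ x) ≤ ‖Matrix.toEuclideanCLM (𝕜 := ℝ) A‖ * euclNorm x := by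
  simp only [euclNorm_eq_norm_toLp, ← Matrix.toEuclideanCLM_toLp]
  exact ContinuousLinearMap.le_opNorm _ _

end EuclNorm

lemma exists_forall_le_of_tendsto_atBot {g : ℝ → ℝ} (hg : Continuous g) {l : ℝ}
    (hl : Tendsto g atBot (𝓝 l)) (c : ℝ) : ∃ C, ∀ s ≤ c, g s ≤ C := by
  obtain ⟨b, hb⟩ := eventually_atBot.mp (hl.eventually_le_const (lt_add_one l))
  obtain ⟨C, hC⟩ := isCompact_Icc.exists_bound_of_continuousOn (hg.continuousOn (s := Icc b c))
  refine ⟨max (l + 1) C, fun s hs => ?_⟩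
  rcases le_total s b with hsb | hbs
  · exact (hb s hsb).trans (le_max_left _ _)
  · exact (le_abs_self _).trans ((hC s ⟨hbs, hs⟩).trans (le_max_right _ _))

section Dilation

variable {n : ℕ} (Gd : Matrix (Fin n) (Fin n) ℝ)

lemma exp_smul_mulVec_exp_smul_mulVec (s t : ℝ) (v : Fin n → ℝ) :
    NormedSpace.exp (s • Gd) *ᵥ (NormedSpace.exp (t • Gd) *ᵥ v)
      = NormedSpace.exp ((s + t) • Gd) *ᵥ v := by
  rw [mulVec_mulVec, add_smul,
    Matrix.exp_add_of_commute _ _ (((Commute.refl Gd).smul_left s).smul_right t)]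

lemma exp_smul_mulVec_exp_neg_smul_mulVec (s : ℝ) (v : Fin n → ℝ) :
    NormedSpace.exp (s • Gd) *ᵥ (NormedSpace.exp ((-s) • Gd) *ᵥ v) = v := by
  rw [exp_smul_mulVec_exp_smul_mulVec, add_neg_cancel, zero_smul, NormedSpace.exp_zero,
    one_mulVec]

lemma continuous_exp_smul_mulVec (v : Fin n → ℝ) :
    Continuous fun s : ℝ => NormedSpace.exp (s • Gd) *ᵥ v := by
  have : Continuous fun s : ℝ => NormedSpace.exp (s • Gd) := by
    open scoped Norms.Operator in
    exact NormedSpace.exp_continuous.comp (continuous_id.smul continuous_const)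
  exact this.matrix_mulVec continuous_const

/-- `⋃_{s ≤ c} d(s) 𝔹`: the union over all `s ≤ c` makes it monotone in `c`, although
`s ↦ ‖d(s) x‖` need not be monotone. -/
def homBall (c : ℝ) : Set (Fin n → ℝ) :=
  {x | ∃ s ≤ c, euclNorm (NormedSpace.exp ((-s) • Gd) *ᵥ x) < 1}

lemma homBall_mono : Monotone (homBall Gd) :=
  fun _ _ h _ ⟨s, hs, hx⟩ => ⟨s, hs.trans h, hx⟩

lemma setOf_euclNorm_lt_one_subset_homBall_zero : {x | euclNorm x < 1} ⊆ homBall Gd 0 :=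
  fun x hx => ⟨0, le_rfl, by simpa using hx⟩

lemma exp_smul_mulVec_mem_homBall {c : ℝ} {x : Fin n → ℝ} (hx : x ∈ homBall Gd c) (σ : ℝ) :
    NormedSpace.exp (σ • Gd) *ᵥ x ∈ homBall Gd (c + σ) := by
  obtain ⟨s, hs, hlt⟩ := hx
  refine ⟨s + σ, by linarith, ?_⟩
  rwa [exp_smul_mulVec_exp_smul_mulVec, show -(s + σ) + σ = -s by ring]

lemma isOpen_homBall (c : ℝ) : IsOpen (homBall Gd c) := by
  have : homBall Gd c = ⋃ s ∈ Iic c, {x | euclNorm (NormedSpace.exp ((-s) • Gd) *ᵥ x) < 1} := by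
    ext; simp [homBall]
  rw [this]
  exact isOpen_biUnion fun s _ => isOpen_lt
    (continuous_euclNorm.comp (continuous_const.matrix_mulVec continuous_id)) continuous_const

variable {Gd}

lemma exists_euclNorm_exp_smul_mulVec_le
    (hlimBot : ∀ x : Fin n → ℝ, x ≠ 0 →
      Tendsto (fun s : ℝ => euclNorm ((NormedSpace.exp (s • Gd)).mulVec x)) atBot (nhds 0))
    (c : ℝ) : ∃ M, ∀ s ≤ c, ∀ v, euclNorm (NormedSpace.exp (s • Gd) *ᵥ v) ≤ M * euclNorm v := by
  have hpointwise : ∀ v : EuclideanSpace ℝ (Fin n), ∃ C, ∀ s : Iic c,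
      ‖Matrix.toEuclideanCLM (𝕜 := ℝ) (NormedSpace.exp ((s : ℝ) • Gd)) v‖ ≤ C := by
    intro v
    rcases eq_or_ne v 0 with rfl | hv
    · exact ⟨0, by simp⟩
    obtain ⟨C, hC⟩ := exists_forall_le_of_tendsto_atBot
      (continuous_euclNorm.comp (continuous_exp_smul_mulVec Gd v.ofLp))
      (hlimBot v.ofLp (by simpa using hv)) c
    refine ⟨C, fun s => ?_⟩
    have := hC s s.2
    rwa [Function.comp_apply, euclNorm_eq_norm_toLp, ← Matrix.toEuclideanCLM_toLp,
      WithLp.toLp_ofLp] at this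
  obtain ⟨M, hM⟩ := banach_steinhaus hpointwise
  exact ⟨M, fun s hs v => (euclNorm_mulVec_le _ v).trans
    (mul_le_mul_of_nonneg_right (hM ⟨s, hs⟩) (euclNorm_nonneg v))⟩

lemma eq_zero_of_forall_mem_homBall
    (hlimTop : ∀ x : Fin n → ℝ, x ≠ 0 →
      Tendsto (fun s : ℝ => euclNorm ((NormedSpace.exp (s • Gd)).mulVec x)) atTop atTop)
    {x : Fin n → ℝ} (hx : ∀ c, x ∈ homBall Gd c) : x = 0 := by
  by_contra hne
  obtain ⟨b, hb⟩ := eventually_atTop.mp ((hlimTop x hne).eventually_ge_atTop 1)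
  obtain ⟨s, hs, hlt⟩ := hx (-b)
  linarith [hb (-s) (by linarith)]

lemma exists_mem_homBall_natCast
    (hlimBot : ∀ x : Fin n → ℝ, x ≠ 0 →
      Tendsto (fun s : ℝ => euclNorm ((NormedSpace.exp (s • Gd)).mulVec x)) atBot (nhds 0))
    (x : Fin n → ℝ) : ∃ K : ℕ, x ∈ homBall Gd K := by
  rcases eq_or_ne x 0 with rfl | hx
  · refine ⟨0, ?_⟩
    rw [Nat.cast_zero]
    exact setOf_euclNorm_lt_one_subset_homBall_zero Gd (show euclNorm (0 : Fin n → ℝ) < 1 by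
      simp [euclNorm])
  obtain ⟨b, hb⟩ := eventually_atBot.mp ((hlimBot x hx).eventually_lt_const one_pos)
  obtain ⟨K, hK⟩ := exists_nat_ge (-b)
  exact ⟨K, K, le_rfl, hb _ (by linarith)⟩

lemma exists_homBall_subset_setOf_euclNorm_le
    (hlimBot : ∀ x : Fin n → ℝ, x ≠ 0 →
      Tendsto (fun s : ℝ => euclNorm ((NormedSpace.exp (s • Gd)).mulVec x)) atBot (nhds 0))
    (c : ℝ) : ∃ M > 0, homBall Gd c ⊆ {x | euclNorm x ≤ M} := by
  obtain ⟨M, hM⟩ := exists_euclNorm_exp_smul_mulVec_le hlimBot c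
  refine ⟨max M 1, by positivity, fun x ⟨s, hs, hlt⟩ => ?_⟩
  calc euclNorm x
      = euclNorm (NormedSpace.exp (s • Gd) *ᵥ (NormedSpace.exp ((-s) • Gd) *ᵥ x)) := by
        rw [exp_smul_mulVec_exp_neg_smul_mulVec]
    _ ≤ M * euclNorm (NormedSpace.exp ((-s) • Gd) *ᵥ x) := hM s hs _
    _ ≤ max M 1 * euclNorm (NormedSpace.exp ((-s) • Gd) *ᵥ x) := by
        gcongr
        · exact euclNorm_nonneg _
        · exact le_max_left _ _
    _ ≤ max M 1 := mul_le_of_le_one_right (by positivity) hlt.le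

end Dilation

section Solutions

variable {n : ℕ} {f : (Fin n → ℝ) → (Fin n → ℝ)}

lemma IsSol.comp_const_add {x : ℝ → Fin n → ℝ} (hx : IsSol f x) {a : ℝ} (ha : 0 ≤ a) :
    IsSol f fun t => x (a + t) :=
  fun t ht => (hx (a + t) (add_nonneg ha ht)).comp_const_add a t

lemma IsSol.dilate {Gd : Matrix (Fin n) (Fin n) ℝ} {μ : ℝ}
    (hhom : ∀ (s : ℝ) (x : Fin n → ℝ),
      f ((NormedSpace.exp (s • Gd)).mulVec x)
        = Real.exp (μ * s) • (NormedSpace.exp (s • Gd)).mulVec (f x))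
    {x : ℝ → Fin n → ℝ} (hx : IsSol f x) (σ : ℝ) :
    IsSol f fun t => NormedSpace.exp (σ • Gd) *ᵥ x (Real.exp (μ * σ) * t) := by
  intro t ht
  have hxt := (hx _ (mul_nonneg (Real.exp_pos _).le ht)).scomp t
    ((hasDerivAt_id t).const_mul (Real.exp (μ * σ)))
  have := (Matrix.mulVecLin (NormedSpace.exp (σ • Gd))).toContinuousLinearMap.hasFDerivAt
    |>.comp_hasDerivAt t hxt
  rw [hhom]
  simpa [Function.comp_def] using this

variable (f) in
def ReachesBy (A B : Set (Fin n → ℝ)) (T : ℝ) : Prop :=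
  ∀ x, IsSol f x → x 0 ∈ A → ∀ t, T ≤ t → x t ∈ B

variable {A A' B B' C : Set (Fin n → ℝ)} {T T' : ℝ}

lemma ReachesBy.mono (h : ReachesBy f A B T) (hA : A' ⊆ A) (hB : B ⊆ B') (hT : T ≤ T') :
    ReachesBy f A' B' T' :=
  fun x hx hx0 t ht => hB (h x hx (hA hx0) t (hT.trans ht))

lemma ReachesBy.trans (hAB : ReachesBy f A B T) (hBC : ReachesBy f B C T') (hT : 0 ≤ T) :
    ReachesBy f A C (T + T') := by
  intro x hx hx0 t ht
  have hshift := hBC _ (hx.comp_const_add hT) (by simpa using hAB x hx hx0 T le_rfl) (t - T)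
    (by linarith)
  simpa using hshift

lemma ReachesBy.homBall_add {Gd : Matrix (Fin n) (Fin n) ℝ} {μ : ℝ}
    (hhom : ∀ (s : ℝ) (x : Fin n → ℝ),
      f ((NormedSpace.exp (s • Gd)).mulVec x)
        = Real.exp (μ * s) • (NormedSpace.exp (s • Gd)).mulVec (f x))
    (h : ReachesBy f (homBall Gd 1) (homBall Gd 0) T) (c : ℝ) :
    ReachesBy f (homBall Gd (c + 1)) (homBall Gd c) (T * Real.exp (-μ * c)) := by
  intro x hx hx0 t ht
  have hy0 : NormedSpace.exp ((-c) • Gd) *ᵥ x (Real.exp (μ * -c) * 0) ∈ homBall Gd 1 := by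
    simpa [mul_zero, show c + 1 + -c = 1 by ring] using exp_smul_mulVec_mem_homBall Gd hx0 (-c)
  have hTt : T ≤ Real.exp (μ * c) * t := by
    calc T = Real.exp (μ * c) * (T * Real.exp (-μ * c)) := by
          rw [mul_left_comm, ← Real.exp_add, neg_mul, add_neg_cancel, Real.exp_zero, mul_one]
      _ ≤ Real.exp (μ * c) * t := by gcongr
  have hyt := exp_smul_mulVec_mem_homBall Gd (h _ (hx.dilate hhom (-c)) hy0 _ hTt) c
  rwa [zero_add, mul_neg, Real.exp_neg, inv_mul_cancel_left₀ (Real.exp_pos _).ne',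
    exp_smul_mulVec_exp_neg_smul_mulVec] at hyt

lemma reachesBy_iterate {B : ℝ → Set (Fin n → ℝ)} {τ : ℝ → ℝ} (hτ : ∀ c, 0 ≤ τ c)
    (h : ∀ c, ReachesBy f (B (c + 1)) (B c) (τ c)) (j : ℕ) (c : ℝ) :
    ReachesBy f (B (c + (j + 1))) (B c) (∑ i ∈ Finset.range (j + 1), τ (c + i)) := by
  induction j generalizing c with
  | zero => simpa using h c
  | succ j ih =>
    have hchain := (ih (c + 1)).trans (h c) (Finset.sum_nonneg fun i _ => hτ _)
    have hlevel : c + (((j + 1 : ℕ) : ℝ) + 1) = c + 1 + (j + 1) := by push_cast; ring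
    have hsum : ∑ i ∈ Finset.range (j + 1 + 1), τ (c + i)
        = ∑ i ∈ Finset.range (j + 1), τ (c + 1 + i) + τ c := by
      rw [Finset.sum_range_succ', Nat.cast_zero, add_zero]
      congr 1
      exact Finset.sum_congr rfl fun i _ => by push_cast; ring_nf
    rwa [hlevel, hsum]

end Solutions

lemma sum_range_exp_neg_mul_le {μ : ℝ} (hμ : 0 < μ) (m : ℕ) :
    ∑ i ∈ Finset.range m, Real.exp (-μ * i) ≤ (1 - Real.exp (-μ))⁻¹ := by
  simp_rw [mul_comm (-μ), Real.exp_nat_mul]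
  have := geom_sum_Ico_le_of_lt_one (m := 0) (n := m)
    (Real.exp_pos (-μ)).le (Real.exp_lt_one_iff.2 (by linarith))
  rwa [← Finset.range_eq_Ico, pow_zero, one_div] at this

lemma sum_range_exp_neg_mul_sub_add_le {μ : ℝ} (hμ : μ < 0) (C : ℝ) (m : ℕ) :
    ∑ i ∈ Finset.range m, Real.exp (-μ * (C - m + i))
      ≤ Real.exp (-μ * C) / (Real.exp (-μ) - 1) := by
  have hr : 1 < Real.exp (-μ) := Real.one_lt_exp_iff.2 (by linarith)
  have hsum : ∑ i ∈ Finset.range m, Real.exp (-μ * (C - m + i))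
      = Real.exp (-μ * (C - m)) * ∑ i ∈ Finset.range m, Real.exp (-μ) ^ i := by
    rw [Finset.mul_sum]
    refine Finset.sum_congr rfl fun i _ => ?_
    rw [← Real.exp_nat_mul, ← Real.exp_add]
    ring_nf
  have htop : Real.exp (-μ * (C - m)) * Real.exp (-μ) ^ m = Real.exp (-μ * C) := by
    rw [← Real.exp_nat_mul, ← Real.exp_add]
    ring_nf
  rw [hsum, geom_sum_eq hr.ne', ← mul_div_assoc, div_le_div_iff_of_pos_right (by linarith),
    mul_sub, htop, mul_one]
  linarith [Real.exp_pos (-μ * (C - m))]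

section Stability

variable {n : ℕ} {Gd : Matrix (Fin n) (Fin n) ℝ} {f : (Fin n → ℝ) → (Fin n → ℝ)} {μ T : ℝ}

lemma reachesBy_singleton_zero_of_neg (hμ : μ < 0)
    (hlimTop : ∀ x : Fin n → ℝ, x ≠ 0 →
      Tendsto (fun s : ℝ => euclNorm ((NormedSpace.exp (s • Gd)).mulVec x)) atTop atTop)
    (hT : 0 ≤ T)
    (hstep : ∀ c, ReachesBy f (homBall Gd (c + 1)) (homBall Gd c) (T * Real.exp (-μ * c)))
    (C : ℝ) : ReachesBy f (homBall Gd C) {0} (T * (Real.exp (-μ * C) / (Real.exp (-μ) - 1))) := by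
  intro x hx hx0 t ht
  refine eq_zero_of_forall_mem_homBall hlimTop fun c => ?_
  obtain ⟨j, hj⟩ := exists_nat_ge (C - c)
  have hdesc := reachesBy_iterate (fun c => mul_nonneg hT (Real.exp_pos _).le) hstep j (C - (j + 1))
  rw [sub_add_cancel] at hdesc
  refine homBall_mono Gd (by linarith) (hdesc.mono subset_rfl subset_rfl ?_ x hx hx0 t ht)
  rw [← Finset.mul_sum]
  gcongr
  simpa using sum_range_exp_neg_mul_sub_add_le hμ C (j + 1)

lemma exists_settlingTime_of_neg (hμ : μ < 0)
    (hlimTop : ∀ x : Fin n → ℝ, x ≠ 0 →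
      Tendsto (fun s : ℝ => euclNorm ((NormedSpace.exp (s • Gd)).mulVec x)) atTop atTop)
    (hlimBot : ∀ x : Fin n → ℝ, x ≠ 0 →
      Tendsto (fun s : ℝ => euclNorm ((NormedSpace.exp (s • Gd)).mulVec x)) atBot (nhds 0))
    (hT : 0 ≤ T)
    (hstep : ∀ c, ReachesBy f (homBall Gd (c + 1)) (homBall Gd c) (T * Real.exp (-μ * c))) :
    ∃ Tset : (Fin n → ℝ) → ℝ,
      (∀ x₀ : Fin n → ℝ, ∃ ε > (0 : ℝ), ∃ Mb : ℝ,
        ∀ y : Fin n → ℝ, euclNorm (y - x₀) < ε → Tset y ≤ Mb) ∧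
      ∀ x : ℝ → Fin n → ℝ, IsSol f x → ∀ t : ℝ, Tset (x 0) ≤ t → x t = 0 := by
  classical
  let K x := Nat.find (exists_mem_homBall_natCast hlimBot x)
  have hK x : x ∈ homBall Gd (K x) := Nat.find_spec (exists_mem_homBall_natCast hlimBot x)
  let Tset x := T * (Real.exp (-μ * K x) / (Real.exp (-μ) - 1))
  refine ⟨Tset, fun x₀ => ?_, fun x hx t ht =>
    reachesBy_singleton_zero_of_neg hμ hlimTop hT hstep _ x hx (hK (x 0)) t ht⟩
  obtain ⟨ε, hε, hball⟩ := exists_euclNorm_sub_lt_subset (isOpen_homBall Gd (K x₀)) (hK x₀)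
  refine ⟨ε, hε, Tset x₀, fun y hy => ?_⟩
  have hKy : K y ≤ K x₀ := Nat.find_min' _ (hball y hy)
  have hμ' : 0 ≤ -μ := by linarith
  have hr : 0 ≤ Real.exp (-μ) - 1 := by linarith [Real.add_one_le_exp (-μ)]
  simp only [Tset]
  gcongr

lemma exists_reachesBy_univ_homBall_zero_of_pos (hμ : 0 < μ)
    (hlimBot : ∀ x : Fin n → ℝ, x ≠ 0 →
      Tendsto (fun s : ℝ => euclNorm ((NormedSpace.exp (s • Gd)).mulVec x)) atBot (nhds 0))
    (hT : 0 ≤ T)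
    (hstep : ∀ c, ReachesBy f (homBall Gd (c + 1)) (homBall Gd c) (T * Real.exp (-μ * c))) :
    ∃ T₀ ≥ 0, ReachesBy f univ (homBall Gd 0) T₀ := by
  have hr : 0 < 1 - Real.exp (-μ) := sub_pos.2 (Real.exp_lt_one_iff.2 (by linarith))
  refine ⟨T * (1 - Real.exp (-μ))⁻¹, by positivity, fun x hx _ t ht => ?_⟩
  obtain ⟨K, hK⟩ := exists_mem_homBall_natCast hlimBot (x 0)
  refine (reachesBy_iterate (fun c => mul_nonneg hT (Real.exp_pos _).le) hstep K 0).mono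
    (homBall_mono Gd (by simp)) subset_rfl ?_ x hx hK t ht
  rw [← Finset.mul_sum]
  gcongr
  simpa using sum_range_exp_neg_mul_le hμ (K + 1)

end Stability

theorem homogeneous_GUAS_implies_finite_or_nearly_fixed_time_general
    (n : ℕ)
    (Gd : Matrix (Fin n) (Fin n) ℝ)
    -- limit property of the dilation d(s) = exp(sGd)
    (hlimTop : ∀ x : Fin n → ℝ, x ≠ 0 →
      Tendsto (fun s : ℝ => euclNorm ((NormedSpace.exp (s • Gd)).mulVec x))
        atTop atTop)
    (hlimBot : ∀ x : Fin n → ℝ, x ≠ 0 →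
      Tendsto (fun s : ℝ => euclNorm ((NormedSpace.exp (s • Gd)).mulVec x))
        atBot (nhds 0))
    (f : (Fin n → ℝ) → (Fin n → ℝ))
    (μ : ℝ)
    -- f is d-homogeneous of degree μ
    (hhom : ∀ (s : ℝ) (x : Fin n → ℝ),
      f ((NormedSpace.exp (s • Gd)).mulVec x)
        = Real.exp (μ * s) • (NormedSpace.exp (s • Gd)).mulVec (f x))
    -- global uniform asymptotic stability: Lyapunov stability ...
    (hstab : ∀ ε > (0 : ℝ), ∃ δ > (0 : ℝ), ∀ x : ℝ → Fin n → ℝ, IsSol f x →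
      euclNorm (x 0) < δ → ∀ t, 0 ≤ t → euclNorm (x t) < ε)
    -- ... together with uniform global attractivity
    (hattr : ∀ r > (0 : ℝ), ∀ ε > (0 : ℝ), ∃ T : ℝ, ∀ x : ℝ → Fin n → ℝ, IsSol f x →
      euclNorm (x 0) ≤ r → ∀ t, T ≤ t → euclNorm (x t) < ε) :
    -- (i) μ < 0 : global uniform finite-time stability
    (μ < 0 →
      (∀ ε > (0 : ℝ), ∃ δ > (0 : ℝ), ∀ x : ℝ → Fin n → ℝ, IsSol f x →
        euclNorm (x 0) < δ → ∀ t, 0 ≤ t → euclNorm (x t) < ε) ∧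
      ∃ Tset : (Fin n → ℝ) → ℝ,
        (∀ x₀ : Fin n → ℝ, ∃ ε > (0 : ℝ), ∃ Mb : ℝ,
          ∀ y : Fin n → ℝ, euclNorm (y - x₀) < ε → Tset y ≤ Mb) ∧
        (∀ x : ℝ → Fin n → ℝ, IsSol f x → ∀ t : ℝ, Tset (x 0) ≤ t → x t = 0)) ∧
    -- (ii) μ > 0 : global uniform nearly fixed-time stability
    (0 < μ →
      (∀ ε > (0 : ℝ), ∃ δ > (0 : ℝ), ∀ x : ℝ → Fin n → ℝ, IsSol f x →
        euclNorm (x 0) < δ → ∀ t, 0 ≤ t → euclNorm (x t) < ε) ∧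
      ∀ r > (0 : ℝ), ∃ Tr > (0 : ℝ), ∀ x : ℝ → Fin n → ℝ, IsSol f x →
        ∀ t, Tr ≤ t → euclNorm (x t) < r) := by
  have hattr' : ∀ r > (0 : ℝ), ∀ ε > (0 : ℝ), ∃ T > (0 : ℝ),
      ReachesBy f {x | euclNorm x ≤ r} {x | euclNorm x < ε} T := fun r hr ε hε => by
    obtain ⟨T, hT⟩ := hattr r hr ε hε
    exact ⟨max T 1, by positivity, fun x hx hx0 t ht => hT x hx hx0 t ((le_max_left _ _).trans ht)⟩
  obtain ⟨M, hM, hballM⟩ := exists_homBall_subset_setOf_euclNorm_le hlimBot 1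
  obtain ⟨Ts, hTs, hstep₀⟩ := hattr' M hM 1 one_pos
  have hstep := (hstep₀.mono hballM (setOf_euclNorm_lt_one_subset_homBall_zero Gd) le_rfl).homBall_add hhom
  refine ⟨fun hμ => ⟨hstab, exists_settlingTime_of_neg hμ hlimTop hlimBot hTs.le hstep⟩,
    fun hμ => ⟨hstab, fun r hr => ?_⟩⟩
  obtain ⟨T₀, hT₀, hreach₀⟩ := exists_reachesBy_univ_homBall_zero_of_pos hμ hlimBot hTs.le hstep
  obtain ⟨T₁, hT₁, hreach₁⟩ := hattr' M hM r hr
  have hreach := hreach₀.trans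
    (hreach₁.mono ((homBall_mono Gd zero_le_one).trans hballM) subset_rfl le_rfl) hT₀
  exact ⟨T₀ + T₁, by positivity, fun x hx t ht => hreach x hx trivial t ht⟩

theorem homogeneous_GUAS_implies_finite_or_nearly_fixed_time
    (n : ℕ) (hn : 0 < n)
    (Gd : Matrix (Fin n) (Fin n) ℝ)
    -- Gd is anti-Hurwitz
    (hGd : ∀ z : ℂ, z ∈ spectrum ℂ (Gd.map (algebraMap ℝ ℂ)) → 0 < z.re)
    -- limit property of the dilation d(s) = exp(sGd)
    (hlimTop : ∀ x : Fin n → ℝ, x ≠ 0 →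
      Tendsto (fun s : ℝ => euclNorm ((NormedSpace.exp (s • Gd)).mulVec x))
        atTop atTop)
    (hlimBot : ∀ x : Fin n → ℝ, x ≠ 0 →
      Tendsto (fun s : ℝ => euclNorm ((NormedSpace.exp (s • Gd)).mulVec x))
        atBot (nhds 0))
    (f : (Fin n → ℝ) → (Fin n → ℝ)) (hf : Continuous f)
    (μ : ℝ)
    -- f is d-homogeneous of degree μ
    (hhom : ∀ (s : ℝ) (x : Fin n → ℝ),
      f ((NormedSpace.exp (s • Gd)).mulVec x)
        = Real.exp (μ * s) • (NormedSpace.exp (s • Gd)).mulVec (f x))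
    -- global uniform asymptotic stability: Lyapunov stability ...
    (hstab : ∀ ε > (0 : ℝ), ∃ δ > (0 : ℝ), ∀ x : ℝ → Fin n → ℝ, IsSol f x →
      euclNorm (x 0) < δ → ∀ t, 0 ≤ t → euclNorm (x t) < ε)
    -- ... together with uniform global attractivity
    (hattr : ∀ r > (0 : ℝ), ∀ ε > (0 : ℝ), ∃ T : ℝ, ∀ x : ℝ → Fin n → ℝ, IsSol f x →
      euclNorm (x 0) ≤ r → ∀ t, T ≤ t → euclNorm (x t) < ε) :
    -- (i) μ < 0 : global uniform finite-time stability
    (μ < 0 →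
      (∀ ε > (0 : ℝ), ∃ δ > (0 : ℝ), ∀ x : ℝ → Fin n → ℝ, IsSol f x →
        euclNorm (x 0) < δ → ∀ t, 0 ≤ t → euclNorm (x t) < ε) ∧
      ∃ Tset : (Fin n → ℝ) → ℝ,
        (∀ x₀ : Fin n → ℝ, ∃ ε > (0 : ℝ), ∃ Mb : ℝ,
          ∀ y : Fin n → ℝ, euclNorm (y - x₀) < ε → Tset y ≤ Mb) ∧
        (∀ x : ℝ → Fin n → ℝ, IsSol f x → ∀ t : ℝ, Tset (x 0) ≤ t → x t = 0)) ∧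
    -- (ii) μ > 0 : global uniform nearly fixed-time stability
    (0 < μ →
      (∀ ε > (0 : ℝ), ∃ δ > (0 : ℝ), ∀ x : ℝ → Fin n → ℝ, IsSol f x →
        euclNorm (x 0) < δ → ∀ t, 0 ≤ t → euclNorm (x t) < ε) ∧
      ∀ r > (0 : ℝ), ∃ Tr > (0 : ℝ), ∀ x : ℝ → Fin n → ℝ, IsSol f x →
        ∀ t, Tr ≤ t → euclNorm (x t) < r) :=
  homogeneous_GUAS_implies_finite_or_nearly_fixed_time_general n Gd hlimTop hlimBot f μ hhom hstab
    hattr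
end
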